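/- Bertram's nested wall theorem in the (s,q)-model, case ch₀ = 0 (Corollary 2.9, second bullet): in a frame (H,γ,u) with ch = (0, y₁H + y₂γ + δ, z), y₁ > 0, and ch' = (r, c₁H + c₂γ + δ', χ') with r ≠ 0, setting q := (s² + t²)/2 and C := (z + duy₂)/(gy₁), the wall condition Re Z_{tH,sH+uγ}(ch')·Im Z_{tH,sH+uγ}(ch) = Re Z_{tH,sH+uγ}(ch)·Im Z_{tH,sH+uγ}(ch') (for t > 0) holds if and only if q = C·(s − c₁/r) + (1/2)(c₁²/r² − F'), where F' := (d/g)(u − c₂/r)² + (1/(r²g))(c₁²g − c₂²d − 2rχ'); in particular all potential walls in the (s,q)-plane are parallel semi-lines of slope C, which is independent of ch'. -/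

import Mathlib

noncomputable section

variable {V : Type*} [AddCommGroup V] [Module ℝ V]

/-- The Mukai pairing on `ℝ × V × ℝ`. -/
def mukaiPair (B : V →ₗ[ℝ] V →ₗ[ℝ] ℝ) (K : V) (w v : ℝ × V × ℝ) : ℝ :=
  B w.2.1 v.2.1 - w.1 * (v.2.2 - (1/2) * B v.2.1 K)
    - v.1 * (w.2.2 + (1/2) * B w.2.1 K) - (1/8) * w.1 * v.1 * B K K

/-- The Mukai vector of a Chern character. -/
def mukaiVec (B : V →ₗ[ℝ] V →ₗ[ℝ] ℝ) (K : V) (χ : ℝ) (ch : ℝ × V × ℝ) : ℝ × V × ℝ :=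
  (ch.1, ch.2.1 - ((1/4 : ℝ) * ch.1) • K,
    ch.2.2 - (1/4) * B ch.2.1 K + (1/2) * ch.1 * (χ - (1/16) * B K K))

/-- Real part of the central charge `Z_{ω,β}(ch)`. -/
def ZRe (B : V →ₗ[ℝ] V →ₗ[ℝ] ℝ) (ω β : V) (ch : ℝ × V × ℝ) : ℝ :=
  -ch.2.2 + B ch.2.1 β - (ch.1 / 2) * (B β β - B ω ω)

/-- Imaginary part of the central charge `Z_{ω,β}(ch)`. -/
def ZIm (B : V →ₗ[ℝ] V →ₗ[ℝ] ℝ) (ω β : V) (ch : ℝ × V × ℝ) : ℝ :=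
  B ch.2.1 ω - ch.1 * B β ω

/-- Real part of the vector `℧_{Z_{ω,β}}`. -/
def mhoRe (B : V →ₗ[ℝ] V →ₗ[ℝ] ℝ) (K : V) (χ : ℝ) (ω β : V) : ℝ × V × ℝ :=
  (1, β - (3/4 : ℝ) • K,
    -(1/2) * B ω ω + (1/2) * B (β - (3/4 : ℝ) • K) (β - (3/4 : ℝ) • K)
      - (1/2) * (χ - (1/8) * B K K))

/-- Imaginary part of the vector `℧_{Z_{ω,β}}`. -/
def mhoIm (B : V →ₗ[ℝ] V →ₗ[ℝ] ℝ) (K : V) (ω β : V) : ℝ × V × ℝ :=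
  (0, ω, B (β - (3/4 : ℝ) • K) ω)

/-- The Bayer–Macrì vector `w_{ω,β}(ch)`. -/
def wBM (B : V →ₗ[ℝ] V →ₗ[ℝ] ℝ) (K : V) (χ : ℝ) (ω β : V) (ch : ℝ × V × ℝ) :
    ℝ × V × ℝ :=
  ZIm B ω β ch • mhoRe B K χ ω β - ZRe B ω β ch • mhoIm B K ω β

/-! In a frame `(H, γ, u)` the central charge sees `ch₁` only through its `H`- and
`γ`-coordinates. Since `ch₀ = 0`, `Im Z(ch) = t g y₁` is independent of `s` and `Re Z(ch)` is
affine in `s`; the `s²` and `t²` terms of the cross term `Re Z(ch') Im Z(ch) - Re Z(ch) Im Z(ch')`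
then combine to `t g² r y₁ q`, and dividing by `t g² r y₁ ≠ 0` leaves `q` minus an affine
function of `s` whose slope `C` involves only `ch`. -/

section Frame

variable (B : V →ₗ[ℝ] V →ₗ[ℝ] ℝ) {H γ δ : V}

theorem ZIm_frame (hγH : B γ H = 0) (hδH : B δ H = 0) (s t u r c₁ c₂ χ : ℝ) :
    ZIm B (t • H) (s • H + u • γ) (r, c₁ • H + c₂ • γ + δ, χ) = t * B H H * (c₁ - r * s) := by
  simp only [ZIm, map_add, map_smul, LinearMap.add_apply, LinearMap.smul_apply, smul_eq_mul,
    hγH, hδH]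
  ring

theorem ZRe_frame (hHγ : B H γ = 0) (hγH : B γ H = 0) (hδH : B δ H = 0) (hδγ : B δ γ = 0)
    (s t u r c₁ c₂ χ : ℝ) :
    ZRe B (t • H) (s • H + u • γ) (r, c₁ • H + c₂ • γ + δ, χ) =
      -χ + B H H * c₁ * s + B γ γ * c₂ * u
        - r / 2 * (B H H * (s ^ 2 - t ^ 2) + B γ γ * u ^ 2) := by
  simp only [ZRe, map_add, map_smul, LinearMap.add_apply, LinearMap.smul_apply, smul_eq_mul,
    hHγ, hγH, hδH, hδγ]
  ring

end Frame

theorem nested_wall_sq_model_rank_zero_general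
    (B : V →ₗ[ℝ] V →ₗ[ℝ] ℝ) (hB : ∀ v w : V, B v w = B w v)
    (H γ : V) (u g d : ℝ)
    (hg : g = B H H) (hgpos : 0 < g) (hHγ : B H γ = 0)
    (hd : d = -(B γ γ))
    (y₁ y₂ z r c₁ c₂ χ' : ℝ) (δ δ' : V)
    (hδH : B δ H = 0) (hδγ : B δ γ = 0) (hδ'H : B δ' H = 0) (hδ'γ : B δ' γ = 0)
    (hy₁ : 0 < y₁) (hr : r ≠ 0)
    (C F' : ℝ)
    (hC : C = (z + d*u*y₂) / (g*y₁))
    (hF' : F' = (d/g) * (u - c₂/r)^2 + (1/(r^2*g)) * (c₁^2*g - c₂^2*d - 2*r*χ')) :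
    ∀ s t : ℝ, 0 < t →
      ((ZRe B (t • H) (s • H + u • γ) (r, c₁ • H + c₂ • γ + δ', χ') *
          ZIm B (t • H) (s • H + u • γ) ((0 : ℝ), y₁ • H + y₂ • γ + δ, z) =
        ZRe B (t • H) (s • H + u • γ) ((0 : ℝ), y₁ • H + y₂ • γ + δ, z) *
          ZIm B (t • H) (s • H + u • γ) (r, c₁ • H + c₂ • γ + δ', χ')) ↔
        (s^2 + t^2) / 2 = C * (s - c₁/r) + (1/2) * (c₁^2/r^2 - F')) := by
  intro s t ht
  have hγH : B γ H = 0 := (hB γ H).trans hHγ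
  have hk : t * g ^ 2 * r * y₁ ≠ 0 := by positivity
  have cross_term :
      ZRe B (t • H) (s • H + u • γ) (r, c₁ • H + c₂ • γ + δ', χ') *
          ZIm B (t • H) (s • H + u • γ) ((0 : ℝ), y₁ • H + y₂ • γ + δ, z) -
        ZRe B (t • H) (s • H + u • γ) ((0 : ℝ), y₁ • H + y₂ • γ + δ, z) *
          ZIm B (t • H) (s • H + u • γ) (r, c₁ • H + c₂ • γ + δ', χ') =
      t * g ^ 2 * r * y₁ *
        ((s ^ 2 + t ^ 2) / 2 - (C * (s - c₁ / r) + (1 / 2) * (c₁ ^ 2 / r ^ 2 - F'))) := by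
    rw [ZRe_frame B hHγ hγH hδ'H hδ'γ, ZRe_frame B hHγ hγH hδH hδγ, ZIm_frame B hγH hδ'H,
      ZIm_frame B hγH hδH, ← hg, show B γ γ = -d by rw [hd, neg_neg], hC, hF']
    field_simp
    ring
  rw [← sub_eq_zero, cross_term, mul_eq_zero, or_iff_right hk, sub_eq_zero]

/-- Bertram's nested wall theorem in the `(s,q)`-model, case `ch₀ = 0`
(Corollary 2.9, second bullet). -/
theorem nested_wall_sq_model_rank_zero
    (B : V →ₗ[ℝ] V →ₗ[ℝ] ℝ) (hB : ∀ v w : V, B v w = B w v)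
    (H γ : V) (u g d : ℝ)
    (hg : g = B H H) (hgpos : 0 < g) (hHγ : B H γ = 0)
    (hd : d = -(B γ γ)) (hdnn : 0 ≤ d) (hu : 0 ≤ u)
    (y₁ y₂ z r c₁ c₂ χ' : ℝ) (δ δ' : V)
    (hδH : B δ H = 0) (hδγ : B δ γ = 0) (hδ'H : B δ' H = 0) (hδ'γ : B δ' γ = 0)
    (hy₁ : 0 < y₁) (hr : r ≠ 0)
    (C F' : ℝ)
    (hC : C = (z + d*u*y₂) / (g*y₁))
    (hF' : F' = (d/g) * (u - c₂/r)^2 + (1/(r^2*g)) * (c₁^2*g - c₂^2*d - 2*r*χ')) :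
    ∀ s t : ℝ, 0 < t →
      ((ZRe B (t • H) (s • H + u • γ) (r, c₁ • H + c₂ • γ + δ', χ') *
          ZIm B (t • H) (s • H + u • γ) ((0 : ℝ), y₁ • H + y₂ • γ + δ, z) =
        ZRe B (t • H) (s • H + u • γ) ((0 : ℝ), y₁ • H + y₂ • γ + δ, z) *
          ZIm B (t • H) (s • H + u • γ) (r, c₁ • H + c₂ • γ + δ', χ')) ↔
        (s^2 + t^2) / 2 = C * (s - c₁/r) + (1/2) * (c₁^2/r^2 - F')) :=
  nested_wall_sq_model_rank_zero_general B hB H γ u g d hg hgpos hHγ hd y₁ y₂ z r c₁ c₂ χ' δ δ' hδH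
    hδγ hδ'H hδ'γ hy₁ hr C F' hC hF'
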